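/- Suppose sprank(A^S) = n. Let the random matrix A be defined by drawing each entry A_{ij} with (i,j) ∈ S independently from a Borel probability distribution on ℝ having no atoms (a continuous distribution), and setting A_{ij} = 0 for (i,j) ∉ S. Then with probability one, cospark(A) = spcospark(A^S). -/

import Mathlib

open Matrix MeasureTheory

/-- `A` has sparsity pattern `S`: the nonzero entries of `A` are exactly those indexed by `S`. -/
def HasPattern {m n : ℕ} (S : Finset (Fin m × Fin n)) (A : Matrix (Fin m) (Fin n) ℝ) : Prop :=
  ∀ i j, A i j ≠ 0 ↔ (i, j) ∈ S

/-- Generic rank of the class of matrices with sparsity pattern `S`. -/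
noncomputable def sprank {m n : ℕ} (S : Finset (Fin m × Fin n)) : ℕ :=
  sSup {r : ℕ | ∃ A : Matrix (Fin m) (Fin n) ℝ, HasPattern S A ∧ A.rank = r}

/-- The sparsity pattern restricted to the rows in `T` (rows outside `T` become zero). -/
def patternOn {m n : ℕ} (S : Finset (Fin m × Fin n)) (T : Finset (Fin m)) :
    Finset (Fin m × Fin n) :=
  S.filter (fun p => p.1 ∈ T)

/-- A matching of a sparsity pattern: any two distinct pairs differ in both coordinates. -/
def IsMatching {m n : ℕ} (M : Finset (Fin m × Fin n)) : Prop :=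
  ∀ p ∈ M, ∀ q ∈ M, p ≠ q → p.1 ≠ q.1 ∧ p.2 ≠ q.2

/-- `nu S` : maximum cardinality of a matching contained in `S`. -/
noncomputable def nu {m n : ℕ} (S : Finset (Fin m × Fin n)) : ℕ :=
  sSup {k : ℕ | ∃ M ⊆ S, IsMatching M ∧ M.card = k}

/-- ℓ₀ "norm": number of nonzero entries of a vector. -/
noncomputable def l0 {m : ℕ} (y : Fin m → ℝ) : ℕ :=
  (Finset.univ.filter (fun i => y i ≠ 0)).card

/-- `cospark A` : minimum of `‖A x‖₀` over nonzero `x`. -/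
noncomputable def cospark {m n : ℕ} (A : Matrix (Fin m) (Fin n) ℝ) : ℕ :=
  sInf {k : ℕ | ∃ x : Fin n → ℝ, x ≠ 0 ∧ l0 (A.mulVec x) = k}

/-- Generic cospark of the class of matrices with sparsity pattern `S`. -/
noncomputable def spcospark {m n : ℕ} (S : Finset (Fin m × Fin n)) : ℕ :=
  sSup {k : ℕ | ∃ A : Matrix (Fin m) (Fin n) ℝ, HasPattern S A ∧ cospark A = k}

/-- The row-submatrix `A_T`, realized as `A` with the rows outside `T` zeroed out. -/
noncomputable def rowRestrict {m n : ℕ} (A : Matrix (Fin m) (Fin n) ℝ) (T : Finset (Fin m)) :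
    Matrix (Fin m) (Fin n) ℝ :=
  Matrix.of fun i j => if i ∈ T then A i j else 0

/-- `X_W` : the rows of the pattern `S` all of whose nonzero positions lie in the columns `W`. -/
def rowsIn {m n : ℕ} (S : Finset (Fin m × Fin n)) (W : Finset (Fin n)) : Finset (Fin m) :=
  Finset.univ.filter (fun i => ∀ j, (i, j) ∈ S → j ∈ W)

/-!
Write `A(y)` for the matrix with pattern `S` whose entries are `y : S → ℝ`. If every row
restriction `A(y)_T` has the generic rank `sprank (patternOn S T)`, then `cospark A(y)` is the
largest cospark of a matrix with pattern `S`: for `x ≠ 0` let `T` be the rows where `A(y) x`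
vanishes; then `A(y)_T` is rank deficient, hence so is `B_T` for every `B` with pattern `S`, and
a kernel vector `x'` of `B_T` has `‖B x'‖₀ ≤ ‖A(y) x‖₀`.

Each rank condition fails only on the zero set of a nonzero polynomial in `y`, namely a maximal
minor of the generic matrix that does not vanish at a matrix realizing the generic rank. Such a
zero set is null for a product of atomless measures: by Fubini, slice by slice it is the finite
root set of a nonzero univariate polynomial, except over the zero set of its leading coefficient,
which is null by induction on the number of variables.
-/

open MvPolynomial

theorem MvPolynomial.ae_eval_ne_zero_fin :
    ∀ {k : ℕ} (μ : Fin k → Measure ℝ) [∀ i, SigmaFinite (μ i)] [∀ i, NullSingletonClass (μ i)]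
      {P : MvPolynomial (Fin k) ℝ}, P ≠ 0 → ∀ᵐ x ∂Measure.pi μ, eval x P ≠ 0
  | 0, μ, _, _, P, hP => ae_of_all _ fun x hx =>
      hP (MvPolynomial.funext fun y => by rw [Subsingleton.elim y x, hx, map_zero])
  | k + 1, μ, _, _, P, hP => by
    set Q := finSuccEquiv ℝ k P
    have hQ : Q.leadingCoeff ≠ 0 := by simpa [Q] using hP
    have hslice : ∀ᵐ y ∂Measure.pi (fun j => μ (Fin.succ j)),
        ∀ᵐ t ∂μ 0, eval (Fin.cons t y : Fin (k + 1) → ℝ) P ≠ 0 := by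
      filter_upwards [ae_eval_ne_zero_fin (fun j => μ (Fin.succ j)) hQ] with y hy
      have hne : Q.map (eval y) ≠ 0 := by
        intro h0
        apply hy
        simpa using congrArg (Polynomial.coeff · Q.natDegree) h0
      filter_upwards [(Polynomial.finite_setOfPred_isRoot hne).countable.ae_notMem (μ 0)]
        with t ht
      rwa [eval_eq_eval_mv_eval']
    have hmeas : MeasurableSet
        {z : ℝ × (Fin k → ℝ) | eval (Fin.cons z.1 z.2 : Fin (k + 1) → ℝ) P ≠ 0} :=
      (isClosed_eq ((continuous_eval P).comp (by fun_prop)) continuous_const).isOpen_compl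
        |>.measurableSet
    have hprod := (Measure.ae_prod_iff_ae_ae hmeas).mpr ((Measure.ae_ae_comm hmeas).mpr hslice)
    have hmp := measurePreserving_piFinSuccAbove μ 0
    simp only [Fin.succAbove_zero] at hmp
    filter_upwards [hmp.quasiMeasurePreserving.ae hprod] with x hx
    simpa using hx

theorem MvPolynomial.ae_eval_ne_zero {ι : Type*} [Fintype ι] (μ : ι → Measure ℝ)
    [∀ i, SigmaFinite (μ i)] [∀ i, NullSingletonClass (μ i)] {P : MvPolynomial ι ℝ}
    (hP : P ≠ 0) : ∀ᵐ x ∂Measure.pi μ, eval x P ≠ 0 := by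
  let e := Fintype.equivFin ι
  have hP' : rename e P ≠ 0 := (map_ne_zero_iff _ (rename_injective _ e.injective)).mpr hP
  have hmp := measurePreserving_piCongrLeft (α := fun _ => ℝ) μ e.symm
  filter_upwards [hmp.symm.quasiMeasurePreserving.ae (ae_eval_ne_zero_fin _ hP')] with x hx
  simpa [eval_rename, Function.comp_def, MeasurableEquiv.piCongrLeft, Equiv.piCongrLeft] using hx

theorem MeasureTheory.Measure.map_restrict_uncurry_pi_pi {ι κ X : Type*} [Fintype ι]
    [Fintype κ] [MeasurableSpace X] (μ : ι → κ → Measure X) [∀ i j, IsProbabilityMeasure (μ i j)]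
    (s : Finset (ι × κ)) :
    (Measure.pi fun i => Measure.pi fun j => μ i j).map (fun ω (p : s) => ω p.1.1 p.1.2) =
      Measure.pi fun p : s => μ p.1.1 p.1.2 := by
  have hpi : (Measure.pi fun i => Measure.pi fun j => μ i j) =
      Measure.infinitePi fun i => Measure.infinitePi fun j => μ i j := by
    simp only [Measure.infinitePi_eq_pi]
  have hcomp : (fun ω (p : s) => ω p.1.1 p.1.2) =
      s.restrict ∘ (MeasurableEquiv.curry ι κ X).symm := rfl
  rw [hcomp, ← Measure.map_map (by fun_prop) (by fun_prop), hpi,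
    Measure.infinitePi_map_curry_symm, Measure.infinitePi_map_restrict]

namespace Matrix

variable {K : Type*} [Field K]

theorem rank_lt_card_width_iff {m n : Type*} [Fintype n] (A : Matrix m n K) :
    A.rank < Fintype.card n ↔ ∃ x ≠ 0, A *ᵥ x = 0 := by
  have h := LinearMap.finrank_range_add_finrank_ker A.mulVecLin
  rw [Module.finrank_fintype_fun_eq_card] at h
  calc A.rank < Fintype.card n ↔ Module.finrank K (LinearMap.ker A.mulVecLin) ≠ 0 := by
        rw [Matrix.rank]; omega
    _ ↔ LinearMap.ker A.mulVecLin ≠ ⊥ := Submodule.finrank_eq_zero.not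
    _ ↔ ∃ x ≠ 0, A *ᵥ x = 0 := by
        simp only [Submodule.ne_bot_iff, LinearMap.mem_ker, mulVecLin_apply, and_comm]

theorem exists_linearIndependent_rows {m n : Type*} [Fintype m] [Fintype n]
    (A : Matrix m n K) : ∃ R : Fin A.rank → m, LinearIndependent K (A.submatrix R id).row := by
  obtain ⟨κ, a, ha, hspan, hli⟩ := exists_linearIndependent' K A.row
  have : Fintype κ := Fintype.ofInjective a ha
  have hcard : Fintype.card κ = A.rank := by
    rw [A.rank_eq_finrank_span_row, ← hspan, finrank_span_eq_card hli]
  let e := Fintype.equivFinOfCardEq hcard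
  exact ⟨a ∘ e.symm, hli.comp e.symm e.symm.injective⟩

theorem exists_submatrix_det_ne_zero {m n : Type*} [Fintype m] [Fintype n]
    (A : Matrix m n K) :
    ∃ (R : Fin A.rank → m) (C : Fin A.rank → n), (A.submatrix R C).det ≠ 0 := by
  obtain ⟨R, hR⟩ := exists_linearIndependent_rows A
  have hrank : (A.submatrix R id)ᵀ.rank = A.rank := by
    rw [rank_transpose, hR.rank_matrix, Fintype.card_fin]
  have hcols := exists_linearIndependent_rows (A.submatrix R id)ᵀ
  rw [hrank] at hcols
  obtain ⟨C, hC⟩ := hcols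
  exact ⟨R, C, ((isUnit_iff_isUnit_det _).mp (linearIndependent_cols_iff_isUnit.mp hC)).ne_zero⟩

theorem card_le_rank_of_det_submatrix_ne_zero {m n r : Type*} [Fintype n] [Fintype r]
    [DecidableEq r] (A : Matrix m n K) {R : r → m} {C : r → n} (h : (A.submatrix R C).det ≠ 0) :
    Fintype.card r ≤ A.rank :=
  (rank_of_det_ne_zero h).symm.le.trans (rank_submatrix_le A R C)

theorem ae_rank_map_eval_le {σ m n : Type*} [Fintype σ] [Fintype m] [Fintype n]
    (μ : σ → Measure ℝ) [∀ i, SigmaFinite (μ i)] [∀ i, NullSingletonClass (μ i)]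
    (N : Matrix m n (MvPolynomial σ ℝ)) (y₀ : σ → ℝ) :
    ∀ᵐ y ∂Measure.pi μ, (N.map (eval y₀)).rank ≤ (N.map (eval y)).rank := by
  obtain ⟨R, C, hRC⟩ := exists_submatrix_det_ne_zero (N.map (eval y₀))
  have heval : ∀ y, eval y (N.submatrix R C).det = ((N.map (eval y)).submatrix R C).det :=
    fun y => RingHom.map_det _ _
  have hdet : (N.submatrix R C).det ≠ 0 := fun h => hRC (by rw [← heval, h, map_zero])
  filter_upwards [ae_eval_ne_zero μ hdet] with y hy
  have := card_le_rank_of_det_submatrix_ne_zero _ ((heval y).symm ▸ hy)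
  rwa [Fintype.card_fin] at this

end Matrix

section SparsityPattern

variable {m n : ℕ}

theorem l0_le_l0 {u v : Fin m → ℝ} (h : ∀ i, u i ≠ 0 → v i ≠ 0) : l0 u ≤ l0 v :=
  Finset.card_le_card fun i => by simpa using h i

theorem cospark_le_l0 {A : Matrix (Fin m) (Fin n) ℝ} {x : Fin n → ℝ} (hx : x ≠ 0) :
    cospark A ≤ l0 (A *ᵥ x) :=
  Nat.sInf_le ⟨x, hx, rfl⟩

theorem cospark_le_cospark {A B : Matrix (Fin m) (Fin n) ℝ}
    (h : ∀ x ≠ 0, ∃ y ≠ 0, l0 (B *ᵥ y) ≤ l0 (A *ᵥ x)) : cospark B ≤ cospark A := by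
  by_cases hn : ∃ x : Fin n → ℝ, x ≠ 0
  · obtain ⟨x₀, hx₀⟩ := hn
    have hA : {k | ∃ x : Fin n → ℝ, x ≠ 0 ∧ l0 (A *ᵥ x) = k}.Nonempty := ⟨_, x₀, hx₀, rfl⟩
    obtain ⟨x, hx, hxA⟩ := Nat.sInf_mem hA
    obtain ⟨y, hy, hyx⟩ := h x hx
    exact (cospark_le_l0 hy).trans (hyx.trans hxA.le)
  · have hB : cospark B = 0 :=
      Nat.sInf_eq_zero.mpr <| .inr <| Set.eq_empty_of_forall_notMem fun _ ⟨y, hy, _⟩ => hn ⟨y, hy⟩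
    exact hB ▸ Nat.zero_le _

theorem rowRestrict_mulVec (A : Matrix (Fin m) (Fin n) ℝ) (T : Finset (Fin m)) (x : Fin n → ℝ)
    (i : Fin m) : (rowRestrict A T *ᵥ x) i = if i ∈ T then (A *ᵥ x) i else 0 := by
  by_cases hi : i ∈ T <;> simp [rowRestrict, mulVec, dotProduct, hi]

theorem hasPattern_rowRestrict {S : Finset (Fin m × Fin n)} {A : Matrix (Fin m) (Fin n) ℝ}
    (hA : HasPattern S A) (T : Finset (Fin m)) :
    HasPattern (patternOn S T) (rowRestrict A T) := by
  intro i j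
  by_cases hi : i ∈ T <;> simp [rowRestrict, patternOn, hi, hA i j]

theorem bddAbove_rank_of_hasPattern (S : Finset (Fin m × Fin n)) :
    BddAbove {r | ∃ A : Matrix (Fin m) (Fin n) ℝ, HasPattern S A ∧ A.rank = r} :=
  ⟨n, by rintro _ ⟨A, -, rfl⟩; exact A.rank_le_width⟩

theorem rank_le_sprank {S : Finset (Fin m × Fin n)} {A : Matrix (Fin m) (Fin n) ℝ}
    (hA : HasPattern S A) : A.rank ≤ sprank S :=
  le_csSup (bddAbove_rank_of_hasPattern S) ⟨A, hA, rfl⟩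

theorem exists_hasPattern_rank_eq_sprank (S : Finset (Fin m × Fin n)) :
    ∃ A : Matrix (Fin m) (Fin n) ℝ, HasPattern S A ∧ A.rank = sprank S := by
  have hS : HasPattern S (of fun i j => if (i, j) ∈ S then (1 : ℝ) else 0) := fun i j => by
    by_cases h : (i, j) ∈ S <;> simp [h]
  have hne : {r | ∃ A : Matrix (Fin m) (Fin n) ℝ, HasPattern S A ∧ A.rank = r}.Nonempty :=
    ⟨_, _, hS, rfl⟩
  exact Nat.sSup_mem hne (bddAbove_rank_of_hasPattern S)

theorem cospark_le_cospark_of_sprank_le_rank {S : Finset (Fin m × Fin n)}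
    {A B : Matrix (Fin m) (Fin n) ℝ} (hB : HasPattern S B)
    (hA : ∀ T, sprank (patternOn S T) ≤ (rowRestrict A T).rank) : cospark B ≤ cospark A := by
  refine cospark_le_cospark fun x hx => ?_
  let T := Finset.univ.filter fun i => (A *ᵥ x) i = 0
  have hAT : (rowRestrict A T).rank < n := by
    have hker : rowRestrict A T *ᵥ x = 0 := funext fun i => by
      by_cases hi : (A *ᵥ x) i = 0 <;> simp [rowRestrict_mulVec, T, hi]
    simpa using (rank_lt_card_width_iff _).mpr ⟨x, hx, hker⟩
  have hBT : (rowRestrict B T).rank < Fintype.card (Fin n) := by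
    simpa using ((rank_le_sprank (hasPattern_rowRestrict hB T)).trans (hA T)).trans_lt hAT
  obtain ⟨y, hy, hBy⟩ := (rank_lt_card_width_iff _).mp hBT
  refine ⟨y, hy, l0_le_l0 fun i hi hAi => hi ?_⟩
  simpa [rowRestrict_mulVec, T, hAi] using congrFun hBy i

theorem cospark_eq_spcospark_of_sprank_le_rank {S : Finset (Fin m × Fin n)}
    {A : Matrix (Fin m) (Fin n) ℝ} (hA : HasPattern S A)
    (hrank : ∀ T, sprank (patternOn S T) ≤ (rowRestrict A T).rank) :
    cospark A = spcospark S := by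
  symm
  refine IsGreatest.csSup_eq ⟨⟨A, hA, rfl⟩, ?_⟩
  rintro _ ⟨B, hB, rfl⟩
  exact cospark_le_cospark_of_sprank_le_rank hB hrank

noncomputable def genericMatrix (S : Finset (Fin m × Fin n)) :
    Matrix (Fin m) (Fin n) (MvPolynomial S ℝ) :=
  of fun i j => if h : (i, j) ∈ S then X ⟨(i, j), h⟩ else 0

theorem eval_genericMatrix_apply (S : Finset (Fin m × Fin n)) (y : S → ℝ) (i : Fin m)
    (j : Fin n) :
    eval y (genericMatrix S i j) = if h : (i, j) ∈ S then y ⟨(i, j), h⟩ else 0 := by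
  by_cases h : (i, j) ∈ S <;> simp [genericMatrix, h]

theorem hasPattern_genericMatrix_map_eval {S : Finset (Fin m × Fin n)} {y : S → ℝ}
    (hy : ∀ p, y p ≠ 0) : HasPattern S ((genericMatrix S).map (eval y)) := by
  intro i j
  by_cases h : (i, j) ∈ S <;> simp [eval_genericMatrix_apply, h, hy]

theorem rowRestrict_genericMatrix_map_eval {S : Finset (Fin m × Fin n)} {T : Finset (Fin m)}
    {A : Matrix (Fin m) (Fin n) ℝ} (hA : HasPattern (patternOn S T) A) :
    rowRestrict ((genericMatrix S).map (eval fun p : S => A p.1.1 p.1.2)) T = A := by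
  ext i j
  have hij := hA i j
  simp only [patternOn, Finset.mem_filter] at hij
  by_cases hi : i ∈ T <;> by_cases h : (i, j) ∈ S <;>
    simp_all [rowRestrict, eval_genericMatrix_apply]

theorem rowRestrict_map {R : Type*} [Zero R] (N : Matrix (Fin m) (Fin n) R) (f : R → ℝ)
    (hf : f 0 = 0) (T : Finset (Fin m)) :
    rowRestrict (N.map f) T = (of fun i j => if i ∈ T then N i j else 0).map f := by
  ext i j
  by_cases hi : i ∈ T <;> simp [rowRestrict, hi, hf]

section Generic

variable {S : Finset (Fin m × Fin n)} (μ : S → Measure ℝ) [∀ p, SigmaFinite (μ p)]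
  [∀ p, NullSingletonClass (μ p)]

theorem ae_sprank_le_rank_rowRestrict (T : Finset (Fin m)) :
    ∀ᵐ y ∂Measure.pi μ,
      sprank (patternOn S T) ≤ (rowRestrict ((genericMatrix S).map (eval y)) T).rank := by
  obtain ⟨A, hA, hrank⟩ := exists_hasPattern_rank_eq_sprank (patternOn S T)
  filter_upwards [ae_rank_map_eval_le μ (of fun i j => if i ∈ T then genericMatrix S i j else 0)
    fun p => A p.1.1 p.1.2] with y hy
  rwa [← rowRestrict_map _ _ (map_zero _), ← rowRestrict_map _ _ (map_zero _),
    rowRestrict_genericMatrix_map_eval hA, hrank] at hy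

theorem ae_cospark_eq_spcospark :
    ∀ᵐ y ∂Measure.pi μ, cospark ((genericMatrix S).map (eval y)) = spcospark S := by
  have hentries : ∀ᵐ y ∂Measure.pi μ, ∀ p, y p ≠ 0 :=
    ae_all_iff.mpr fun p => by simpa using ae_eval_ne_zero μ (X_ne_zero p)
  filter_upwards [hentries, ae_all_iff.mpr (ae_sprank_le_rank_rowRestrict μ)] with y hy hrank
  exact cospark_eq_spcospark_of_sprank_le_rank (hasPattern_genericMatrix_map_eval hy) hrank

end Generic

end SparsityPattern

theorem stmt4_general {m n : ℕ} (S : Finset (Fin m × Fin n))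
    (μ : Fin m → Fin n → Measure ℝ) [∀ i j, IsProbabilityMeasure (μ i j)]
    (hatoms : ∀ i j, (i, j) ∈ S → ∀ x : ℝ, μ i j {x} = 0) :
    (Measure.pi fun i => Measure.pi fun j => μ i j)
      {ω : Fin m → Fin n → ℝ |
        cospark (Matrix.of fun i j => if (i, j) ∈ S then ω i j else 0) = spcospark S} = 1 := by
  have : ∀ p : S, NullSingletonClass (μ p.1.1 p.1.2) := fun p => ⟨hatoms _ _ p.2⟩
  let restrictS : (Fin m → Fin n → ℝ) → S → ℝ := fun ω p => ω p.1.1 p.1.2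
  have hmatrix : ∀ ω, (Matrix.of fun i j => if (i, j) ∈ S then ω i j else 0) =
      (genericMatrix S).map (eval (restrictS ω)) := fun ω => by
    ext i j
    by_cases h : (i, j) ∈ S <;> simp [eval_genericMatrix_apply, restrictS, h]
  have hae := ae_of_ae_map (by fun_prop : Measurable restrictS).aemeasurable
    ((Measure.map_restrict_uncurry_pi_pi μ S).symm ▸ ae_cospark_eq_spcospark _)
  simp_rw [← hmatrix] at hae
  exact (measure_congr (ae_eq_univ.mpr hae)).trans measure_univ

/-- if `sprank S = n` and the entries indexed by `S` are drawn independently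
from atomless Borel probability distributions on ℝ (entries outside `S` set to zero), then
with probability one the cospark equals the generic cospark. -/
theorem stmt4 {m n : ℕ} (hn : 1 ≤ n) (hmn : n < m) (S : Finset (Fin m × Fin n))
    (hspr : sprank S = n)
    (μ : Fin m → Fin n → Measure ℝ) [∀ i j, IsProbabilityMeasure (μ i j)]
    (hatoms : ∀ i j, (i, j) ∈ S → ∀ x : ℝ, μ i j {x} = 0) :
    (Measure.pi fun i => Measure.pi fun j => μ i j)
      {ω : Fin m → Fin n → ℝ |
        cospark (Matrix.of fun i j => if (i, j) ∈ S then ω i j else 0) = spcospark S} = 1 :=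
  stmt4_general S μ hatoms
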